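/- arXiv:1511.07400 — 6 statements merged into one kernel-verified Lean document; each statement's English description precedes it below -/
import Mathlib

section
/- Fix λ > 0 with (1+λ)/(1+λ²) < 1 (i.e., λ > 1). Let F : ℝ² → ℝ² be bounded by K₀ and Lipschitz with constant K_x, let R be the rotation R(w₁,w₂) = (w₂,-w₁), and define sequences by z^{n+1} = [Id - λR]⁻¹(z^n - (F(x^n) - F(x^{n-1}))), x^n = x^{n-1} + Δt F(x^{n-1}) + Δt z^n. Assume (1+λ)/(1+λ²)(1 + K_x Δt) ≤ θ < 1. Then for all n ≥ 1, ‖z^n‖ ≤ a + θ^{n-1} b where a = ((1+λ)/(1+λ²)) K_x K₀ Δt /(1 - θ) ⋅ C and b = a + ((1+λ)/(1+λ²))‖z^1_{pre}‖, with z^1 = [Id-λR]⁻¹ z^1_{pre}; in particular ‖z^n‖ ≤ C'(Δt/λ)(1 + ‖z^1_{pre}‖) + θ^{n-1}‖z^1_{pre}‖ for some constant C' depending only on K₀, K_x. -/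
/-!
Multiplying by `1 + λ i` realises `Id - λR` on `ℂ`, so its inverse shrinks norms by
`1/√(1+λ²) ≤ (1+λ)/(1+λ²) =: μ`. The drift increment `F(xⁿ) - F(xⁿ⁻¹)` is at most
`K_x Δt (K₀ + ‖zⁿ‖)` because `xⁿ - xⁿ⁻¹ = Δt (F(xⁿ⁻¹) + zⁿ)`, giving the affine recursion
`‖zⁿ⁺¹‖ ≤ θ ‖zⁿ‖ + μ K_x K₀ Δt`, which unrolls to the first bound. The second follows from
`μ ≤ 1` and `μ ≤ 2/λ`.
-/

/-- The planar rotation by -90°: `(w₁, w₂) ↦ (w₂, -w₁)`. -/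
noncomputable def Rrot (w : ℂ) : ℂ := -Complex.I * w

open Complex

lemma sub_smul_Rrot (lam : ℝ) (w : ℂ) : w - lam • Rrot w = (1 + lam * I) * w := by
  simp only [Rrot, Complex.real_smul]
  ring

lemma norm_le_of_sub_smul_Rrot_eq {lam : ℝ} (hlam : 0 ≤ lam) {z w : ℂ}
    (h : z - lam • Rrot z = w) : ‖z‖ ≤ (1 + lam) / (1 + lam ^ 2) * ‖w‖ := by
  set s := √(1 + lam ^ 2)
  have hs0 : 0 < s := Real.sqrt_pos.2 (by positivity)
  have hs2 : s ^ 2 = 1 + lam ^ 2 := Real.sq_sqrt (by positivity)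
  have hs : s ≤ 1 + lam := Real.sqrt_le_iff.2 ⟨by linarith, by nlinarith⟩
  have hw : ‖w‖ = s * ‖z‖ := by
    rw [← h, sub_smul_Rrot, norm_mul, ← ofReal_one, norm_add_mul_I, one_pow]
  calc ‖z‖ ≤ (1 + lam) / s * ‖z‖ :=
        le_mul_of_one_le_left (norm_nonneg z) ((one_le_div hs0).2 hs)
    _ = (1 + lam) / (1 + lam ^ 2) * ‖w‖ := by
        rw [hw, ← hs2]
        field_simp

lemma resolvent_bound_le_one {lam : ℝ} (hlam : 1 ≤ lam) : (1 + lam) / (1 + lam ^ 2) ≤ 1 := by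
  rw [div_le_one (by positivity)]
  nlinarith

lemma resolvent_bound_le_two_div {lam : ℝ} (hlam : 0 < lam) :
    (1 + lam) / (1 + lam ^ 2) ≤ 2 / lam := by
  rw [div_le_div_iff₀ (by positivity) hlam]
  nlinarith [sq_nonneg (lam - 1)]

lemma norm_sub_le_of_eq_add_smul {E : Type*} [SeminormedAddCommGroup E] [NormedSpace ℝ E]
    {Δt K₀ : ℝ} (hΔt : 0 ≤ Δt) {x₀ x₁ f z : E} (hf : ‖f‖ ≤ K₀)
    (hx : x₁ = x₀ + Δt • f + Δt • z) : ‖x₁ - x₀‖ ≤ Δt * (K₀ + ‖z‖) := by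
  calc ‖x₁ - x₀‖ = ‖Δt • (f + z)‖ := by rw [hx, smul_add]; abel_nf
    _ ≤ Δt * (K₀ + ‖z‖) := by
        rw [norm_smul, Real.norm_of_nonneg hΔt]
        gcongr
        exact (norm_add_le f z).trans (by linarith)

lemma le_add_pow_mul_of_le_mul_add {u : ℕ → ℝ} {θ c : ℝ} (hθ : 0 ≤ θ) (hθ1 : θ ≠ 1)
    (hu : ∀ n, u (n + 1) ≤ θ * u n + c) (n : ℕ) :
    u n ≤ c / (1 - θ) + θ ^ n * (u 0 - c / (1 - θ)) := by
  induction n with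
  | zero => simp
  | succ n ih =>
    have hfix : θ * (c / (1 - θ)) + c = c / (1 - θ) := by
      field_simp [sub_ne_zero.2 hθ1.symm]
      ring
    calc u (n + 1) ≤ θ * u n + c := hu n
      _ ≤ θ * (c / (1 - θ) + θ ^ n * (u 0 - c / (1 - θ))) + c := by gcongr
      _ = c / (1 - θ) + θ ^ (n + 1) * (u 0 - c / (1 - θ)) := by
        linear_combination hfix

lemma norm_scheme_step_le {lam Δt K₀ Kx : ℝ} (hlam : 0 ≤ lam) (hΔt : 0 ≤ Δt) (hKx : 0 ≤ Kx)
    {F : ℂ → ℂ} {x₀ x₁ z₁ z₂ : ℂ} (hF : ‖F x₀‖ ≤ K₀)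
    (hFlip : ‖F x₁ - F x₀‖ ≤ Kx * ‖x₁ - x₀‖)
    (hx : x₁ = x₀ + Δt • F x₀ + Δt • z₁) (hz : z₂ - lam • Rrot z₂ = z₁ - (F x₁ - F x₀)) :
    ‖z₂‖ ≤ (1 + lam) / (1 + lam ^ 2) * (1 + Kx * Δt) * ‖z₁‖
      + (1 + lam) / (1 + lam ^ 2) * Kx * K₀ * Δt := by
  have hincr : ‖F x₁ - F x₀‖ ≤ Kx * (Δt * (K₀ + ‖z₁‖)) :=
    hFlip.trans (by gcongr; exact norm_sub_le_of_eq_add_smul hΔt hF hx)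
  calc ‖z₂‖ ≤ (1 + lam) / (1 + lam ^ 2) * ‖z₁ - (F x₁ - F x₀)‖ :=
        norm_le_of_sub_smul_Rrot_eq hlam hz
    _ ≤ (1 + lam) / (1 + lam ^ 2) * (‖z₁‖ + Kx * (Δt * (K₀ + ‖z₁‖))) := by
        gcongr
        exact (norm_sub_le _ _).trans (by linarith)
    _ = _ := by ring

lemma exists_const_bound_of_le_add_pow_mul {u : ℕ → ℝ} {lam Δt K₀ Kx θ N : ℝ}
    (hlam : 1 ≤ lam) (hΔt : 0 ≤ Δt) (hK₀ : 0 ≤ K₀) (hKx : 0 ≤ Kx) (hθ0 : 0 ≤ θ) (hθ1 : θ < 1)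
    (hN : 0 ≤ N)
    (hu : ∀ n : ℕ, 1 ≤ n →
      u n ≤ (1 + lam) / (1 + lam ^ 2) * Kx * K₀ * Δt / (1 - θ)
        + θ ^ (n - 1) * ((1 + lam) / (1 + lam ^ 2) * Kx * K₀ * Δt / (1 - θ)
            + (1 + lam) / (1 + lam ^ 2) * N)) :
    ∃ C' : ℝ, 0 < C' ∧ ∀ n : ℕ, 1 ≤ n → u n ≤ C' * (Δt / lam) * (1 + N) + θ ^ (n - 1) * N := by
  have hlam0 : 0 < lam := by linarith
  set μ := (1 + lam) / (1 + lam ^ 2)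
  set a := μ * Kx * K₀ * Δt / (1 - θ)
  have hK : 0 ≤ 4 * Kx * K₀ / (1 - θ) := div_nonneg (by positivity) (by linarith)
  have hD : 0 ≤ Δt / lam := by positivity
  have ha0 : 0 ≤ a := div_nonneg (by positivity) (by linarith)
  have ha : a ≤ 2 * Kx * K₀ / (1 - θ) * (Δt / lam) :=
    calc a = μ * (Kx * K₀ * Δt / (1 - θ)) := by ring
      _ ≤ 2 / lam * (Kx * K₀ * Δt / (1 - θ)) := by
          gcongr
          exact resolvent_bound_le_two_div hlam0
      _ = 2 * Kx * K₀ / (1 - θ) * (Δt / lam) := by ring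
  have hμN : μ * N ≤ N := mul_le_of_le_one_left hN (resolvent_bound_le_one hlam)
  refine ⟨4 * Kx * K₀ / (1 - θ) + 1, by positivity, fun n hn => (hu n hn).trans ?_⟩
  have hpow : θ ^ (n - 1) ≤ 1 := pow_le_one₀ hθ0 hθ1.le
  calc a + θ ^ (n - 1) * (a + μ * N) ≤ 2 * a + θ ^ (n - 1) * N := by
        linear_combination mul_le_of_le_one_left ha0 hpow
          + mul_le_mul_of_nonneg_left hμN (pow_nonneg hθ0 (n - 1))
    _ ≤ 4 * Kx * K₀ / (1 - θ) * (Δt / lam) + θ ^ (n - 1) * N := by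
        linear_combination 2 * ha
    _ ≤ (4 * Kx * K₀ / (1 - θ) + 1) * (Δt / lam) * (1 + N) + θ ^ (n - 1) * N := by
        nlinarith [mul_nonneg (add_nonneg hK zero_le_one) (mul_nonneg hD hN)]

/-- Bound on the auxiliary variable `z^n` for the first-order semi-implicit
scheme with a time-independent bounded Lipschitz drift `F`: if
`((1+λ)/(1+λ²))(1 + K_x Δt) ≤ θ < 1`, then
`‖z^n‖ ≤ a + θ^{n-1} b` where `a = ((1+λ)/(1+λ²)) K_x K₀ Δt/(1-θ)` and
`b = a + ((1+λ)/(1+λ²))‖z¹_pre‖`; in particular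
`‖z^n‖ ≤ C'(Δt/λ)(1 + ‖z¹_pre‖) + θ^{n-1}‖z¹_pre‖` for some `C' > 0`. -/
theorem stmt6 (lam Δt K₀ Kx θ : ℝ) (hlam : 1 < lam) (hΔt : 0 < Δt)
    (hK₀ : 0 ≤ K₀) (hKx : 0 < Kx)
    (F : ℂ → ℂ) (hFbound : ∀ x : ℂ, ‖F x‖ ≤ K₀)
    (hFlip : ∀ x y : ℂ, ‖F x - F y‖ ≤ Kx * ‖x - y‖)
    (hθ : (1 + lam) / (1 + lam ^ 2) * (1 + Kx * Δt) ≤ θ) (hθ1 : θ < 1)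
    (x z : ℕ → ℂ) (z1pre : ℂ)
    (hx : ∀ n : ℕ, 1 ≤ n → x n = x (n - 1) + Δt • F (x (n - 1)) + Δt • z n)
    (hz1 : z 1 - lam • Rrot (z 1) = z1pre)
    (hz : ∀ n : ℕ, 1 ≤ n →
      z (n + 1) - lam • Rrot (z (n + 1)) = z n - (F (x n) - F (x (n - 1)))) :
    (∀ n : ℕ, 1 ≤ n →
      ‖z n‖ ≤ ((1 + lam) / (1 + lam ^ 2)) * Kx * K₀ * Δt / (1 - θ)
        + θ ^ (n - 1) * (((1 + lam) / (1 + lam ^ 2)) * Kx * K₀ * Δt / (1 - θ)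
            + ((1 + lam) / (1 + lam ^ 2)) * ‖z1pre‖)) ∧
    (∃ C' : ℝ, 0 < C' ∧ ∀ n : ℕ, 1 ≤ n →
      ‖z n‖ ≤ C' * (Δt / lam) * (1 + ‖z1pre‖) + θ ^ (n - 1) * ‖z1pre‖) := by
  have hlam0 : 0 < lam := by linarith
  set μ := (1 + lam) / (1 + lam ^ 2)
  have hθ0 : 0 ≤ θ := (by positivity : 0 ≤ μ * (1 + Kx * Δt)).trans hθ
  have hz1' : ‖z 1‖ ≤ μ * ‖z1pre‖ := norm_le_of_sub_smul_Rrot_eq hlam0.le hz1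
  have hstep (n : ℕ) : ‖z (n + 2)‖ ≤ θ * ‖z (n + 1)‖ + μ * Kx * K₀ * Δt :=
    (norm_scheme_step_le hlam0.le hΔt.le hKx.le (hFbound _) (hFlip _ _)
      (hx (n + 1) (by omega)) (hz (n + 1) (by omega))).trans (by gcongr)
  have hbound (n : ℕ) (hn : 1 ≤ n) :
      ‖z n‖ ≤ μ * Kx * K₀ * Δt / (1 - θ)
        + θ ^ (n - 1) * (μ * Kx * K₀ * Δt / (1 - θ) + μ * ‖z1pre‖) := by
    obtain ⟨m, rfl⟩ := Nat.exists_eq_add_of_le' hn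
    have ha0 : 0 ≤ μ * Kx * K₀ * Δt / (1 - θ) := div_nonneg (by positivity) (by linarith)
    refine (le_add_pow_mul_of_le_mul_add (u := fun m => ‖z (m + 1)‖) hθ0 hθ1.ne hstep m).trans ?_
    simp only [Nat.add_sub_cancel]
    gcongr
    linarith
  exact ⟨hbound, exists_const_bound_of_le_add_pow_mul hlam.le hΔt.le hK₀ hKx.le hθ0 hθ1
    (norm_nonneg _) hbound⟩
end

section
/- (Uniform consistency, autonomous case.) Let F : ℝ² → ℝ² be bounded (by K₀) and Lipschitz (constant K_x > 0), R the −90° rotation, λ = Δt/ε², and define (x^n, z^n) by x^n = x^{n-1} + Δt F(x^{n-1}) + Δt z^n, z^1 = [Id−λR]⁻¹(w^0 − F(x^0)), z^{n+1} = [Id−λR]⁻¹(z^n − (F(x^n) − F(x^{n-1}))), and the limit scheme y^{n+1} = y^n + Δt F(y^n), y^0 = x^0. Then for every 0 ≤ θ < 1 there is a constant C_θ (depending only on θ, K₀, K_x) such that whenever ((1+λ)/(1+λ²))(1 + K_x Δt) ≤ θ, one has for all n: ‖x^n − y^n‖ ≤ C_θ (Δt/λ)(K₀ + ‖w^0 −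 F(x^0)‖) e^{K_x n Δt}. -/
lemma norm_sub_smul_Rrot (lam : ℝ) (u : ℂ) : ‖u - lam • Rrot u‖ = √(1 + lam ^ 2) * ‖u‖ := by
  have : u - lam • Rrot u = (1 + lam * Complex.I) * u := by
    simp only [Rrot, Complex.real_smul]; ring
  rw [this, norm_mul, ← Complex.ofReal_one, Complex.norm_add_mul_I, one_pow]

lemma inv_sqrt_one_add_sq_le {lam : ℝ} (hlam : 0 ≤ lam) :
    (√(1 + lam ^ 2))⁻¹ ≤ (1 + lam) / (1 + lam ^ 2) := by
  have hle : √(1 + lam ^ 2) ≤ 1 + lam := Real.sqrt_le_iff.2 ⟨by positivity, by nlinarith⟩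
  have hsq := Real.mul_self_sqrt (by positivity : (0 : ℝ) ≤ 1 + lam ^ 2)
  set s := √(1 + lam ^ 2)
  have hs : 0 < s := by positivity
  rwa [le_div_iff₀ (by positivity), ← hsq, ← mul_assoc, inv_mul_cancel₀ hs.ne', one_mul]

lemma le_pow_mul_add_div_of_le_mul_add {a : ℕ → ℝ} {θ b : ℝ} (hθ0 : 0 ≤ θ) (hθ1 : θ < 1)
    (hb : 0 ≤ b) (h : ∀ k, a (k + 1) ≤ θ * a k + b) (k : ℕ) :
    a k ≤ θ ^ k * a 0 + b / (1 - θ) := by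
  have hθ1' : 0 < 1 - θ := sub_pos.2 hθ1
  induction k with
  | zero => simp only [pow_zero, one_mul, le_add_iff_nonneg_right]; positivity
  | succ k ih =>
    calc a (k + 1) ≤ θ * a k + b := h k
    _ ≤ θ * (θ ^ k * a 0 + b / (1 - θ)) + b := by gcongr
    _ = θ ^ (k + 1) * a 0 + b / (1 - θ) := by field_simp; ring

section Scheme

variable {F : ℂ → ℂ} {K₀ Kx lam Δt : ℝ} {x y z : ℕ → ℂ}

lemma norm_scheme_increment_le (hFbound : ∀ x : ℂ, ‖F x‖ ≤ K₀) (hΔt : 0 ≤ Δt) {k : ℕ}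
    (hx : x (k + 1) = x k + Δt • F (x k) + Δt • z (k + 1)) :
    ‖x (k + 1) - x k‖ ≤ Δt * (K₀ + ‖z (k + 1)‖) := by
  rw [hx, add_assoc, add_sub_cancel_left, ← smul_add, norm_smul, Real.norm_of_nonneg hΔt]
  gcongr
  exact (norm_add_le _ _).trans (by gcongr; exact hFbound _)

lemma sqrt_one_add_sq_mul_norm_z_succ_le (hFbound : ∀ x : ℂ, ‖F x‖ ≤ K₀)
    (hFlip : ∀ x y : ℂ, ‖F x - F y‖ ≤ Kx * ‖x - y‖) (hKx : 0 ≤ Kx) (hΔt : 0 ≤ Δt) {k : ℕ}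
    (hx : x (k + 1) = x k + Δt • F (x k) + Δt • z (k + 1))
    (hz : z (k + 2) - lam • Rrot (z (k + 2)) = z (k + 1) - (F (x (k + 1)) - F (x k))) :
    √(1 + lam ^ 2) * ‖z (k + 2)‖ ≤ (1 + Kx * Δt) * ‖z (k + 1)‖ + Kx * Δt * K₀ := by
  rw [← norm_sub_smul_Rrot, hz]
  calc ‖z (k + 1) - (F (x (k + 1)) - F (x k))‖
      ≤ ‖z (k + 1)‖ + Kx * ‖x (k + 1) - x k‖ := (norm_sub_le _ _).trans (by gcongr; exact hFlip _ _)
    _ ≤ ‖z (k + 1)‖ + Kx * (Δt * (K₀ + ‖z (k + 1)‖)) := by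
      gcongr; exact norm_scheme_increment_le hFbound hΔt hx
    _ = (1 + Kx * Δt) * ‖z (k + 1)‖ + Kx * Δt * K₀ := by ring

lemma norm_sub_euler_succ_le (hFlip : ∀ x y : ℂ, ‖F x - F y‖ ≤ Kx * ‖x - y‖) (hΔt : 0 ≤ Δt) {m : ℕ}
    (hx : x (m + 1) = x m + Δt • F (x m) + Δt • z (m + 1))
    (hy : y (m + 1) = y m + Δt • F (y m)) :
    ‖x (m + 1) - y (m + 1)‖ ≤ (1 + Kx * Δt) * ‖x m - y m‖ + Δt * ‖z (m + 1)‖ := by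
  have : x (m + 1) - y (m + 1) = (x m - y m) + Δt • (F (x m) - F (y m)) + Δt • z (m + 1) := by
    rw [hx, hy, smul_sub]; abel
  rw [this]
  refine norm_add₃_le.trans ?_
  rw [norm_smul, norm_smul, Real.norm_of_nonneg hΔt]
  calc ‖x m - y m‖ + Δt * ‖F (x m) - F (y m)‖ + Δt * ‖z (m + 1)‖
      ≤ ‖x m - y m‖ + Δt * (Kx * ‖x m - y m‖) + Δt * ‖z (m + 1)‖ := by gcongr; exact hFlip _ _
    _ = (1 + Kx * Δt) * ‖x m - y m‖ + Δt * ‖z (m + 1)‖ := by ring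

lemma sqrt_one_add_sq_mul_norm_z_le (hFbound : ∀ x : ℂ, ‖F x‖ ≤ K₀)
    (hFlip : ∀ x y : ℂ, ‖F x - F y‖ ≤ Kx * ‖x - y‖) (hK₀ : 0 ≤ K₀) (hKx : 0 ≤ Kx)
    (hΔt : 0 ≤ Δt) {θ : ℝ} (hθ0 : 0 ≤ θ) (hθ1 : θ < 1)
    (hcontr : 1 + Kx * Δt ≤ θ * √(1 + lam ^ 2))
    (hx : ∀ k, x (k + 1) = x k + Δt • F (x k) + Δt • z (k + 1))
    (hz : ∀ k, z (k + 2) - lam • Rrot (z (k + 2)) = z (k + 1) - (F (x (k + 1)) - F (x k)))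
    (k : ℕ) :
    √(1 + lam ^ 2) * ‖z (k + 1)‖
      ≤ θ ^ k * (√(1 + lam ^ 2) * ‖z 1‖) + Kx * Δt * K₀ / (1 - θ) := by
  refine le_pow_mul_add_div_of_le_mul_add (a := fun k ↦ √(1 + lam ^ 2) * ‖z (k + 1)‖)
    hθ0 hθ1 (by positivity) (fun k ↦ ?_) k
  calc √(1 + lam ^ 2) * ‖z (k + 2)‖ ≤ (1 + Kx * Δt) * ‖z (k + 1)‖ + Kx * Δt * K₀ :=
        sqrt_one_add_sq_mul_norm_z_succ_le hFbound hFlip hKx hΔt (hx k) (hz k)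
    _ ≤ θ * (√(1 + lam ^ 2) * ‖z (k + 1)‖) + Kx * Δt * K₀ := by
        rw [← mul_assoc]; gcongr

lemma norm_sub_euler_le (hFlip : ∀ x y : ℂ, ‖F x - F y‖ ≤ Kx * ‖x - y‖) (hK₀ : 0 ≤ K₀)
    (hKx : 0 ≤ Kx) (hΔt : 0 ≤ Δt) {θ ν D : ℝ} (hθ0 : 0 ≤ θ) (hθ1 : θ < 1) (hν : 0 < ν)
    (hD : 0 ≤ D) (hx : ∀ k, x (k + 1) = x k + Δt • F (x k) + Δt • z (k + 1))
    (hy0 : y 0 = x 0) (hy : ∀ k, y (k + 1) = y k + Δt • F (y k))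
    (hz : ∀ k, ν * ‖z (k + 1)‖ ≤ θ ^ k * D + Kx * Δt * K₀ / (1 - θ)) (n : ℕ) :
    ‖x n - y n‖ ≤ Δt * (K₀ + D) / ((1 - θ) * ν) * Real.exp (Kx * n * Δt) := by
  have hθ1' : 0 < 1 - θ := sub_pos.2 hθ1
  -- Shifting the error by `S` absorbs the constant part of the forcing into the factor `1 + Kx Δt`.
  set S := Δt * K₀ / ((1 - θ) * ν)
  have hS : 0 ≤ S := by positivity
  have step (m : ℕ) : ‖x (m + 1) - y (m + 1)‖ + S
      ≤ (1 + Kx * Δt) * (‖x m - y m‖ + S) + Δt / ν * θ ^ m * D := by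
    have hzm : ‖z (m + 1)‖ ≤ (θ ^ m * D + Kx * Δt * K₀ / (1 - θ)) / ν :=
      (le_div_iff₀' hν).2 (hz m)
    calc ‖x (m + 1) - y (m + 1)‖ + S
        ≤ (1 + Kx * Δt) * ‖x m - y m‖ + Δt * ‖z (m + 1)‖ + S := by
          gcongr; exact norm_sub_euler_succ_le hFlip hΔt (hx m) (hy m)
      _ ≤ (1 + Kx * Δt) * ‖x m - y m‖
            + Δt * ((θ ^ m * D + Kx * Δt * K₀ / (1 - θ)) / ν) + S := by gcongr
      _ = (1 + Kx * Δt) * (‖x m - y m‖ + S) + Δt / ν * θ ^ m * D := by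
          simp only [S]; field_simp; ring
  have hgron := discrete_gronwall (u := fun m ↦ ‖x m - y m‖ + S) (c := fun _ ↦ Kx * Δt)
    (b := fun m ↦ Δt / ν * θ ^ m * D) (n₀ := 0) (by positivity) (fun m _ ↦ step m)
    (fun _ _ ↦ by positivity) (fun _ _ ↦ by positivity) n.zero_le
  have hgeom : ∑ m ∈ Finset.Ico 0 n, Δt / ν * θ ^ m * D ≤ Δt / ν * D / (1 - θ) := by
    simp_rw [mul_right_comm _ _ D, ← Finset.mul_sum, div_eq_mul_inv _ (1 - θ)]
    gcongr
    simpa using geom_sum_Ico_le_of_lt_one hθ0 hθ1 (m := 0) (n := n)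
  have hexp : ∑ _ ∈ Finset.Ico 0 n, Kx * Δt = Kx * n * Δt := by simp; ring
  calc ‖x n - y n‖ ≤ ‖x n - y n‖ + S := le_add_of_nonneg_right hS
    _ ≤ (S + ∑ m ∈ Finset.Ico 0 n, Δt / ν * θ ^ m * D) * Real.exp (Kx * n * Δt) := by
        simpa only [hy0, sub_self, norm_zero, zero_add, hexp] using hgron
    _ ≤ (S + Δt / ν * D / (1 - θ)) * Real.exp (Kx * n * Δt) := by gcongr
    _ = Δt * (K₀ + D) / ((1 - θ) * ν) * Real.exp (Kx * n * Δt) := by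
        simp only [S]; field_simp

end Scheme

/-- Uniform consistency of the first-order semi-implicit scheme (autonomous,
constant magnetic field case of Theorem 4.1): for every `0 ≤ θ < 1` there is
`C_θ` (depending only on `θ, K₀, K_x`) such that whenever
`((1+λ)/(1+λ²))(1 + K_x Δt) ≤ θ`, the scheme iterates `x^n` and the forward
Euler iterates `y^n` of the guiding-center equation satisfy
`‖x^n − y^n‖ ≤ C_θ (Δt/λ)(K₀ + ‖w⁰ − F(x⁰)‖) e^{K_x n Δt}`. -/
theorem stmt7 (K₀ Kx : ℝ) (hK₀ : 0 ≤ K₀) (hKx : 0 < Kx)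
    (F : ℂ → ℂ) (hFbound : ∀ x : ℂ, ‖F x‖ ≤ K₀)
    (hFlip : ∀ x y : ℂ, ‖F x - F y‖ ≤ Kx * ‖x - y‖) :
    ∀ θ : ℝ, 0 ≤ θ → θ < 1 →
    ∃ C : ℝ, 0 < C ∧
      ∀ (lam Δt : ℝ), 0 < lam → 0 < Δt →
      ∀ (x z y : ℕ → ℂ) (w0 : ℂ),
        (∀ n : ℕ, 1 ≤ n → x n = x (n - 1) + Δt • F (x (n - 1)) + Δt • z n) →
        (z 1 - lam • Rrot (z 1) = w0 - F (x 0)) →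
        (∀ n : ℕ, 1 ≤ n →
          z (n + 1) - lam • Rrot (z (n + 1)) = z n - (F (x n) - F (x (n - 1)))) →
        (y 0 = x 0) →
        (∀ n : ℕ, y (n + 1) = y n + Δt • F (y n)) →
        (1 + lam) / (1 + lam ^ 2) * (1 + Kx * Δt) ≤ θ →
        ∀ n : ℕ, ‖x n - y n‖
          ≤ C * (Δt / lam) * (K₀ + ‖w0 - F (x 0)‖) * Real.exp (Kx * n * Δt) := by
  intro θ hθ0 hθ1
  refine ⟨(1 - θ)⁻¹, inv_pos.2 (sub_pos.2 hθ1), ?_⟩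
  intro lam Δt hlam hΔt x z y w0 hx hz1 hzrec hy0 hyrec hcond n
  have hx' (k : ℕ) : x (k + 1) = x k + Δt • F (x k) + Δt • z (k + 1) := hx (k + 1) k.succ_pos
  have hzrec' (k : ℕ) :
      z (k + 2) - lam • Rrot (z (k + 2)) = z (k + 1) - (F (x (k + 1)) - F (x k)) :=
    hzrec (k + 1) k.succ_pos
  have hν : 0 < √(1 + lam ^ 2) := by positivity
  have hcontr : 1 + Kx * Δt ≤ θ * √(1 + lam ^ 2) := by
    have h := (mul_le_mul_of_nonneg_right (inv_sqrt_one_add_sq_le hlam.le)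
      (by positivity : 0 ≤ 1 + Kx * Δt)).trans hcond
    rw [inv_mul_le_iff₀ hν] at h
    linarith
  have hz1' : √(1 + lam ^ 2) * ‖z 1‖ = ‖w0 - F (x 0)‖ := by rw [← norm_sub_smul_Rrot, hz1]
  have hz := sqrt_one_add_sq_mul_norm_z_le hFbound hFlip hK₀ hKx.le hΔt.le hθ0 hθ1 hcontr hx' hzrec'
  rw [hz1'] at hz
  have hlamν : lam ≤ √(1 + lam ^ 2) := Real.le_sqrt_of_sq_le (by linarith)
  calc ‖x n - y n‖ ≤ Δt * (K₀ + ‖w0 - F (x 0)‖) / ((1 - θ) * √(1 + lam ^ 2))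
        * Real.exp (Kx * n * Δt) :=
      norm_sub_euler_le hFlip hK₀ hKx.le hΔt.le hθ0 hθ1 hν (norm_nonneg _) hx' hy0 hyrec hz n
    _ ≤ Δt * (K₀ + ‖w0 - F (x 0)‖) / ((1 - θ) * lam) * Real.exp (Kx * n * Δt) := by
      have := sub_pos.2 hθ1
      gcongr
    _ = (1 - θ)⁻¹ * (Δt / lam) * (K₀ + ‖w0 - F (x 0)‖) * Real.exp (Kx * n * Δt) := by
      field_simp
end

section
/- For a sequence defined by v^{n+1} = v^n + λ R v^{n+1} + (Δt/ε) E (λ = Δt/ε² > 0, E ∈ ℝ² fixed, R the −90° rotation), i.e., v^{n+1} = [Id−λR]⁻¹(v^n + (Δt/ε)E), the unique fixed point v* of the map satisfies v* = [Id−λR]⁻¹(v* + ελ E), hence ε⁻¹ v* = −R⁻¹E = R E (since R² = −Id), i.e., ε⁻¹v* = E ∧ B, and ‖ε⁻¹v^n − E∧B‖ ≤ (1+λ²)^{-n/2}‖ε⁻¹v^0 − E∧B‖; in particular ε⁻¹v^n converges as n → ∞ to the guiding-center velocity E ∧ B. -/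
/-- Constant-fields case of the first-order semi-implicit scheme:
`v^{n+1} = [Id − λR]⁻¹(v^n + (Δt/ε)E)` with `λ = Δt/ε²`.  The unique fixed
point `v*` satisfies `ε⁻¹ v* = R E = E ∧ B`, and
`‖ε⁻¹v^n − E∧B‖ ≤ (1+λ²)^{-n/2} ‖ε⁻¹v^0 − E∧B‖`. -/
theorem stmt8 (ε Δt lam : ℝ) (hε : 0 < ε) (hΔt : 0 < Δt)
    (hlam : lam = Δt / ε ^ 2) (E : ℂ) (v : ℕ → ℂ)
    (hscheme : ∀ n : ℕ,
      v (n + 1) - lam • Rrot (v (n + 1)) = v n + (Δt / ε) • E) :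
    ((ε • Rrot E) - lam • Rrot (ε • Rrot E) = (ε • Rrot E) + (Δt / ε) • E) ∧
    (∀ w : ℂ, w - lam • Rrot w = w + (Δt / ε) • E → w = ε • Rrot E) ∧
    ((ε⁻¹ • (ε • Rrot E) : ℂ) = Rrot E) ∧
    (∀ n : ℕ, ‖ε⁻¹ • v n - Rrot E‖
        ≤ (1 + lam ^ 2) ^ (-(n : ℝ) / 2) * ‖ε⁻¹ • v 0 - Rrot E‖) := by
  have hε' : (ε : ℂ) ≠ 0 := by exact_mod_cast hε.ne'
  have hlam0 : 0 < lam := by rw [hlam]; positivity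
  have hΔ : Δt / ε = lam * ε := by rw [hlam]; field_simp
  have hΔC : ((Δt / ε : ℝ) : ℂ) = (lam : ℂ) * ε := by exact_mod_cast hΔ
  refine ⟨?_, ?_, ?_, ?_⟩
  · simp only [Rrot, Complex.real_smul, hΔC]
    linear_combination (-(ε : ℂ)) * lam * E * Complex.I_sq
  · intro w hw
    simp only [Rrot, Complex.real_smul, hΔC] at hw ⊢
    have hlamC : (lam : ℂ) ≠ 0 := by exact_mod_cast hlam0.ne'
    have h2 : Complex.I * w = (ε : ℂ) * E :=
      mul_left_cancel₀ hlamC (by linear_combination hw)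
    linear_combination -Complex.I * h2 + w * Complex.I_sq
  · simp only [Complex.real_smul]
    field_simp
    rw [← Complex.ofReal_mul, one_div, inv_mul_cancel₀ hε.ne', Complex.ofReal_one, one_mul]
  · -- key recurrence
    have key : ∀ n : ℕ,
        (ε⁻¹ • v (n + 1) - Rrot E) * (1 + Complex.I * lam)
          = ε⁻¹ • v n - Rrot E := by
      intro n
      have h := hscheme n
      simp only [Rrot, Complex.real_smul, Complex.ofReal_inv, hΔC] at h ⊢
      have hεinv : (ε : ℂ) * (ε : ℂ)⁻¹ = 1 := mul_inv_cancel₀ hε'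
      linear_combination (ε : ℂ)⁻¹ * h + (lam : ℂ) * E * Complex.I_sq
        + (lam : ℂ) * E * hεinv
    have h1 : (0 : ℝ) < 1 + lam ^ 2 := by positivity
    have hnorm : ‖(1 + Complex.I * lam : ℂ)‖ = Real.sqrt (1 + lam ^ 2) := by
      rw [Complex.norm_def, Complex.normSq_apply]
      norm_num [pow_two]
    have hsqrt_pos : 0 < Real.sqrt (1 + lam ^ 2) := Real.sqrt_pos.mpr h1
    have hstep : ∀ n : ℕ, ‖ε⁻¹ • v (n + 1) - Rrot E‖
        = ‖ε⁻¹ • v n - Rrot E‖ / Real.sqrt (1 + lam ^ 2) := by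
      intro n
      rw [eq_div_iff hsqrt_pos.ne', ← hnorm, ← norm_mul, key n]
    have hrpow : (1 + lam ^ 2) ^ (-(1 : ℝ) / 2) = (Real.sqrt (1 + lam ^ 2))⁻¹ := by
      rw [Real.sqrt_eq_rpow, ← Real.rpow_neg h1.le]
      norm_num
    intro n
    induction n with
    | zero => simp
    | succ n ih =>
        rw [hstep n]
        have : (1 + lam ^ 2) ^ (-((n : ℝ) + 1) / 2)
            = (1 + lam ^ 2) ^ (-(n : ℝ) / 2) * (Real.sqrt (1 + lam ^ 2))⁻¹ := by
          rw [← hrpow, ← Real.rpow_add h1]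
          ring_nf
        push_cast
        rw [this, div_eq_mul_inv, mul_comm ((1 + lam ^ 2) ^ (-(n:ℝ)/2)), mul_assoc,
          mul_comm ((Real.sqrt (1 + lam ^ 2))⁻¹)]
        exact mul_le_mul_of_nonneg_right ih (by positivity)
end

section
/- (Consistency of the first-order scheme as ε → 0, Proposition 3.2.) Let E, B : ℝ × ℝ² → ℝ continuous with B bounded away from 0, let B_ext(t,x) = (0,0,B(t,x)), and for each ε > 0 let (x^n_ε, v^n_ε)_{0≤n≤N} solve the semi-implicit scheme x^{n+1}_ε = x^n_ε + (Δt/ε) v^{n+1}_ε, v^{n+1}_ε = v^n_ε + (Δt/ε)(ε⁻¹ v^{n+1}_ε ∧ B_ext(t^n, x^n_ε) + E(t^n, x^n_ε)). Assume (x^n_ε, ε v^n_ε) is bounded uniformly in ε for each n, and (x^0_ε, ε v^0_ε) → (y^0, 0) as ε → 0. Then for each 1 ≤ n ≤ N, x^n_ε → y^n where y^{n+1} = y^n + Δt E(t^n, y^n) ∧ B_ext(t^n, y^n)/‖B_ext(t^n,y^n)‖². -/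
open Filter Topology Complex

lemma ofReal_sq_add_I_mul_ne_zero {ε : ℝ} (hε : ε ≠ 0) (c : ℝ) : (ε : ℂ) ^ 2 + I * c ≠ 0 := by
  intro h
  have := congrArg re h
  simp [pow_two] at this
  exact hε this

lemma semiImplicit_step_eq {Δt ε b : ℝ} {x v x' v' e : ℂ} (hε : ε ≠ 0)
    (hx : x' = x + (Δt / ε) • v')
    (hv : v' = v + (Δt / ε) • (ε⁻¹ • (b • Rrot v') + e)) :
    x' = x + Δt * ((ε * v + Δt * e) / (ε ^ 2 + I * (Δt * b))) ∧
      ε • v' = ε ^ 2 * ((ε * v + Δt * e) / (ε ^ 2 + I * (Δt * b))) := by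
  have hεC : (ε : ℂ) ≠ 0 := ofReal_ne_zero.mpr hε
  have hD := ofReal_sq_add_I_mul_ne_zero hε (Δt * b)
  push_cast at hD
  have hv' : v' = ε * (ε * v + Δt * e) / (ε ^ 2 + I * (Δt * b)) := by
    rw [eq_div_iff hD]
    simp only [Rrot, real_smul, ofReal_div, ofReal_inv] at hv
    field_simp at hv
    linear_combination hv
  simp only [real_smul, ofReal_div] at hx ⊢
  rw [hx, hv']
  constructor <;> field_simp

lemma tendsto_ofReal_sq_zero {l : Filter ℝ} (hl : l ≤ 𝓝 0) :
    Tendsto (fun ε : ℝ => (ε : ℂ) ^ 2) l (𝓝 0) := by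
  have : Continuous (fun ε : ℝ => (ε : ℂ) ^ 2) := by fun_prop
  exact (this.tendsto' 0 0 (by simp)).mono_left hl

lemma tendsto_step_quotient {l : Filter ℝ} (hl : l ≤ 𝓝 0) {Δt b : ℝ} (hΔt : Δt ≠ 0) (hb : b ≠ 0)
    {v e : ℝ → ℂ} {β : ℝ → ℝ} {e₀ : ℂ}
    (hv : Tendsto (fun ε : ℝ => (ε : ℂ) * v ε) l (𝓝 0)) (he : Tendsto e l (𝓝 e₀))
    (hβ : Tendsto β l (𝓝 b)) :
    Tendsto (fun ε : ℝ => ((ε : ℂ) * v ε + Δt * e ε) / ((ε : ℂ) ^ 2 + I * (Δt * β ε))) l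
      (𝓝 (Rrot e₀ / b)) := by
  have hnum := hv.add ((tendsto_const_nhds (x := (Δt : ℂ))).mul he)
  have hden := (tendsto_ofReal_sq_zero hl).add ((tendsto_const_nhds (x := I)).mul
    ((tendsto_const_nhds (x := (Δt : ℂ))).mul ((continuous_ofReal.tendsto b).comp hβ)))
  have hval : (0 + Δt * e₀) / (0 + I * (Δt * b)) = Rrot e₀ / b := by
    have : (Δt : ℂ) ≠ 0 := ofReal_ne_zero.mpr hΔt
    have : (b : ℂ) ≠ 0 := ofReal_ne_zero.mpr hb
    simp only [Rrot, zero_add]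
    field_simp
    ring_nf; rw [I_sq]; ring
  rw [← hval]
  refine hnum.div hden ?_
  simp [hΔt, hb]

lemma tendsto_semiImplicit_step {l : Filter ℝ} (hl : l ≤ 𝓝[≠] 0) {Δt : ℝ} (hΔt : Δt ≠ 0)
    {e : ℂ → ℂ} {β : ℂ → ℝ} {y : ℂ} (he : ContinuousAt e y) (hβ : ContinuousAt β y)
    (hβy : β y ≠ 0) {x v x' v' : ℝ → ℂ}
    (hx : Tendsto x l (𝓝 y)) (hv : Tendsto (fun ε => ε • v ε) l (𝓝 0))
    (hx' : ∀ᶠ ε in l, x' ε = x ε + (Δt / ε) • v' ε)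
    (hv' : ∀ᶠ ε in l, v' ε = v ε + (Δt / ε) • (ε⁻¹ • (β (x ε) • Rrot (v' ε)) + e (x ε))) :
    Tendsto x' l (𝓝 (y + (Δt / β y) • Rrot (e y))) ∧
      Tendsto (fun ε => ε • v' ε) l (𝓝 0) := by
  have hl0 : l ≤ 𝓝 0 := hl.trans nhdsWithin_le_nhds
  have hq := tendsto_step_quotient hl0 hΔt hβy (by simpa only [real_smul] using hv)
    (he.tendsto.comp hx) (hβ.tendsto.comp hx)
  have hstep : ∀ᶠ ε in l, _ := (hx'.and hv').and (hl self_mem_nhdsWithin)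
  constructor
  · have hlim := hx.add ((tendsto_const_nhds (x := (Δt : ℂ))).mul hq)
    rw [real_smul, ofReal_div, div_mul_eq_mul_div, mul_div_assoc]
    refine hlim.congr' (hstep.mono fun ε ⟨⟨hxε, hvε⟩, hε⟩ => ?_)
    exact ((semiImplicit_step_eq hε hxε hvε).1).symm
  · have hlim := (tendsto_ofReal_sq_zero hl0).mul hq
    rw [zero_mul] at hlim
    refine hlim.congr' (hstep.mono fun ε ⟨⟨hxε, hvε⟩, hε⟩ => ?_)
    exact ((semiImplicit_step_eq hε hxε hvε).2).symm

theorem stmt9_general (Δt : ℝ) (hΔt : 0 < Δt) (N : ℕ)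
    (E : ℝ → ℂ → ℂ) (B : ℝ → ℂ → ℝ)
    (hE : Continuous (fun p : ℝ × ℂ => E p.1 p.2))
    (hB : Continuous (fun p : ℝ × ℂ => B p.1 p.2))
    (bmin : ℝ) (hbmin : 0 < bmin) (hBlow : ∀ t x, bmin ≤ |B t x|)
    (X V : ℝ → ℕ → ℂ)
    (hschemeX : ∀ ε : ℝ, 0 < ε → ∀ n : ℕ, n < N →
      X ε (n + 1) = X ε n + (Δt / ε) • V ε (n + 1))
    (hschemeV : ∀ ε : ℝ, 0 < ε → ∀ n : ℕ, n < N →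
      V ε (n + 1) = V ε n
        + (Δt / ε) • (ε⁻¹ • (B (n * Δt) (X ε n) • Rrot (V ε (n + 1)))
            + E (n * Δt) (X ε n)))
    (y0 : ℂ)
    (hX0 : Filter.Tendsto (fun ε => X ε 0) (nhdsWithin 0 (Set.Ioi 0)) (nhds y0))
    (hV0 : Filter.Tendsto (fun ε => ε • V ε 0) (nhdsWithin 0 (Set.Ioi 0)) (nhds 0))
    (y : ℕ → ℂ) (hy0 : y 0 = y0)
    (hy : ∀ n : ℕ, n < N →
      y (n + 1) = y n + (Δt / B (n * Δt) (y n)) • Rrot (E (n * Δt) (y n))) :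
    ∀ n : ℕ, 1 ≤ n → n ≤ N →
      Filter.Tendsto (fun ε => X ε n) (nhdsWithin 0 (Set.Ioi 0)) (nhds (y n)) := by
  suffices h : ∀ n ≤ N, Tendsto (fun ε => X ε n) (𝓝[>] 0) (𝓝 (y n)) ∧
      Tendsto (fun ε => ε • V ε n) (𝓝[>] 0) (𝓝 0) from fun n _ hn => (h n hn).1
  intro n
  induction n with
  | zero => exact fun _ => ⟨hy0 ▸ hX0, hV0⟩
  | succ n ih =>
    intro hn
    obtain ⟨hXn, hVn⟩ := ih (by omega)
    rw [hy n hn]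
    exact tendsto_semiImplicit_step (nhdsGT_le_nhdsNE 0) hΔt.ne'
      (hE.comp (Continuous.prodMk_right _)).continuousAt
      (hB.comp (Continuous.prodMk_right _)).continuousAt
      (abs_pos.mp (hbmin.trans_le (hBlow _ _))) hXn hVn
      (eventually_nhdsWithin_of_forall fun ε hε => hschemeX ε hε n hn)
      (eventually_nhdsWithin_of_forall fun ε hε => hschemeV ε hε n hn)

/-- Consistency of the first-order semi-implicit scheme in the limit
`ε → 0` (Proposition 3.2): under uniform boundedness of `(x^n_ε, ε v^n_ε)`
and convergence of the initial data, the positions `x^n_ε` converge to the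
forward Euler iterates `y^n` of the guiding-center equation
`ẏ = E ∧ B_ext/‖B_ext‖²`. -/
theorem stmt9 (Δt : ℝ) (hΔt : 0 < Δt) (N : ℕ)
    (E : ℝ → ℂ → ℂ) (B : ℝ → ℂ → ℝ)
    (hE : Continuous (fun p : ℝ × ℂ => E p.1 p.2))
    (hB : Continuous (fun p : ℝ × ℂ => B p.1 p.2))
    (bmin : ℝ) (hbmin : 0 < bmin) (hBlow : ∀ t x, bmin ≤ |B t x|)
    (X V : ℝ → ℕ → ℂ)
    (hschemeX : ∀ ε : ℝ, 0 < ε → ∀ n : ℕ, n < N →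
      X ε (n + 1) = X ε n + (Δt / ε) • V ε (n + 1))
    (hschemeV : ∀ ε : ℝ, 0 < ε → ∀ n : ℕ, n < N →
      V ε (n + 1) = V ε n
        + (Δt / ε) • (ε⁻¹ • (B (n * Δt) (X ε n) • Rrot (V ε (n + 1)))
            + E (n * Δt) (X ε n)))
    (hbound : ∀ n : ℕ, n ≤ N → ∃ M : ℝ, ∀ ε : ℝ, 0 < ε → ε ≤ 1 →
      ‖X ε n‖ ≤ M ∧ ‖ε • V ε n‖ ≤ M)
    (y0 : ℂ)
    (hX0 : Filter.Tendsto (fun ε => X ε 0) (nhdsWithin 0 (Set.Ioi 0)) (nhds y0))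
    (hV0 : Filter.Tendsto (fun ε => ε • V ε 0) (nhdsWithin 0 (Set.Ioi 0)) (nhds 0))
    (y : ℕ → ℂ) (hy0 : y 0 = y0)
    (hy : ∀ n : ℕ, n < N →
      y (n + 1) = y n + (Δt / B (n * Δt) (y n)) • Rrot (E (n * Δt) (y n))) :
    ∀ n : ℕ, 1 ≤ n → n ≤ N →
      Filter.Tendsto (fun ε => X ε n) (nhdsWithin 0 (Set.Ioi 0)) (nhds (y n)) :=
  stmt9_general Δt hΔt N E B hE hB bmin hbmin hBlow X V hschemeX hschemeV y0 hX0 hV0 y hy0 hy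
end

section
/- In the setting of Proposition 3.2 (first-order semi-implicit scheme with uniformly bounded (x^n_ε, ε v^n_ε)), for each 1 ≤ n ≤ N the family (ε⁻¹ v^n_ε)_{ε>0} is uniformly bounded as ε → 0, and moreover ε v^n_ε → 0 for every 0 ≤ n ≤ N. -/
open Filter Topology

lemma mul_inv_smul_eq_of_semiImplicit_step {ε Δt b : ℝ} {v w e : ℂ} (hε : ε ≠ 0)
    (h : w = v + (Δt / ε) • (ε⁻¹ • (b • Rrot w) + e)) :
    ((ε : ℂ) ^ 2 + Δt * b * Complex.I) * (ε⁻¹ • w) = ε • v + Δt • e := by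
  have hε' : (ε : ℂ) ≠ 0 := by exact_mod_cast hε
  simp only [Rrot, Complex.real_smul, Complex.ofReal_div, Complex.ofReal_inv] at h ⊢
  field_simp at h ⊢
  linear_combination h

lemma abs_im_mul_norm_le (c z : ℂ) : |c.im| * ‖z‖ ≤ ‖c * z‖ := by
  rw [norm_mul]
  gcongr
  exact Complex.abs_im_le_norm c

lemma norm_inv_smul_le_of_semiImplicit_step {ε Δt b bmin : ℝ} {v w e : ℂ} (hε : ε ≠ 0)
    (hΔt : 0 < Δt) (hbmin : 0 < bmin) (hb : bmin ≤ |b|)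
    (h : w = v + (Δt / ε) • (ε⁻¹ • (b • Rrot w) + e)) :
    ‖ε⁻¹ • w‖ ≤ (‖ε • v‖ + Δt * ‖e‖) / (Δt * bmin) := by
  rw [le_div_iff₀ (by positivity)]
  have him : ((ε : ℂ) ^ 2 + Δt * b * Complex.I).im = Δt * b := by simp [pow_two]
  calc ‖ε⁻¹ • w‖ * (Δt * bmin)
      ≤ |((ε : ℂ) ^ 2 + Δt * b * Complex.I).im| * ‖ε⁻¹ • w‖ := by
        rw [him, abs_mul, abs_of_pos hΔt, mul_comm]
        gcongr
    _ ≤ ‖((ε : ℂ) ^ 2 + Δt * b * Complex.I) * (ε⁻¹ • w)‖ := abs_im_mul_norm_le _ _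
    _ = ‖ε • v + Δt • e‖ := by rw [mul_inv_smul_eq_of_semiImplicit_step hε h]
    _ ≤ ‖ε • v‖ + Δt * ‖e‖ := by
        grw [norm_add_le, norm_smul Δt, Real.norm_of_nonneg hΔt.le]

lemma exists_bound_inv_smul_of_semiImplicit_step {Δt bmin M : ℝ} (hΔt : 0 < Δt)
    (hbmin : 0 < bmin) {e : ℂ → ℂ} (he : Continuous e) {b : ℂ → ℝ} (hb : ∀ x, bmin ≤ |b x|)
    {x v w : ℝ → ℂ} (hxv : ∀ ε, 0 < ε → ε ≤ 1 → ‖x ε‖ ≤ M ∧ ‖ε • v ε‖ ≤ M)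
    (hstep : ∀ ε, 0 < ε → w ε = v ε + (Δt / ε) • (ε⁻¹ • (b (x ε) • Rrot (w ε)) + e (x ε))) :
    ∃ M' δ : ℝ, 0 < δ ∧ ∀ ε, 0 < ε → ε ≤ δ → ‖ε⁻¹ • w ε‖ ≤ M' := by
  obtain ⟨C, hC⟩ := (isCompact_closedBall (0 : ℂ) M).exists_bound_of_continuousOn he.continuousOn
  refine ⟨(M + Δt * C) / (Δt * bmin), 1, one_pos, fun ε hε hε1 => ?_⟩
  obtain ⟨hx, hv⟩ := hxv ε hε hε1
  have he : ‖e (x ε)‖ ≤ C := hC _ (mem_closedBall_zero_iff.mpr hx)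
  grw [norm_inv_smul_le_of_semiImplicit_step hε.ne' hΔt hbmin (hb _) (hstep ε hε), hv, he]

lemma tendsto_smul_nhdsGT_zero_of_bounded_inv_smul {F : Type*} [NormedAddCommGroup F]
    [NormedSpace ℝ F] {f : ℝ → F} {M δ : ℝ} (hδ : 0 < δ)
    (hf : ∀ ε, 0 < ε → ε ≤ δ → ‖ε⁻¹ • f ε‖ ≤ M) :
    Tendsto (fun ε => ε • f ε) (𝓝[>] 0) (𝓝 0) := by
  have hsmall : ∀ᶠ ε in 𝓝[>] (0 : ℝ), ‖ε • f ε‖ ≤ ε ^ 2 * M := by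
    filter_upwards [Ioo_mem_nhdsGT hδ] with ε ⟨hε, hεδ⟩
    calc ‖ε • f ε‖ = ‖(ε ^ 2) • (ε⁻¹ • f ε)‖ := by
          rw [smul_smul, sq, mul_assoc, mul_inv_cancel₀ hε.ne', mul_one]
      _ ≤ ε ^ 2 * M := by
          rw [norm_smul, Real.norm_of_nonneg (sq_nonneg ε)]
          gcongr
          exact hf ε hε hεδ.le
  have hlim : Tendsto (fun ε : ℝ => ε ^ 2 * M) (𝓝[>] 0) (𝓝 0) := by
    have hcont : Continuous fun ε : ℝ => ε ^ 2 * M := by fun_prop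
    simpa using (hcont.tendsto' 0 _ (by simp)).mono_left nhdsWithin_le_nhds
  exact squeeze_zero_norm' hsmall hlim

theorem stmt10_general (Δt : ℝ) (hΔt : 0 < Δt) (N : ℕ)
    (E : ℝ → ℂ → ℂ) (B : ℝ → ℂ → ℝ)
    (hE : Continuous (fun p : ℝ × ℂ => E p.1 p.2))
    (bmin : ℝ) (hbmin : 0 < bmin) (hBlow : ∀ t x, bmin ≤ |B t x|)
    (X V : ℝ → ℕ → ℂ)
    (hschemeV : ∀ ε : ℝ, 0 < ε → ∀ n : ℕ, n < N →
      V ε (n + 1) = V ε n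
        + (Δt / ε) • (ε⁻¹ • (B (n * Δt) (X ε n) • Rrot (V ε (n + 1)))
            + E (n * Δt) (X ε n)))
    (hbound : ∀ n : ℕ, n ≤ N → ∃ M : ℝ, ∀ ε : ℝ, 0 < ε → ε ≤ 1 →
      ‖X ε n‖ ≤ M ∧ ‖ε • V ε n‖ ≤ M)
    (hV0 : Filter.Tendsto (fun ε => ε • V ε 0) (nhdsWithin 0 (Set.Ioi 0)) (nhds 0)) :
    (∀ n : ℕ, 1 ≤ n → n ≤ N → ∃ M δ : ℝ, 0 < δ ∧
      ∀ ε : ℝ, 0 < ε → ε ≤ δ → ‖ε⁻¹ • V ε n‖ ≤ M) ∧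
    (∀ n : ℕ, n ≤ N →
      Filter.Tendsto (fun ε => ε • V ε n) (nhdsWithin 0 (Set.Ioi 0)) (nhds 0)) := by
  have hbounded : ∀ n : ℕ, 1 ≤ n → n ≤ N → ∃ M δ : ℝ, 0 < δ ∧
      ∀ ε : ℝ, 0 < ε → ε ≤ δ → ‖ε⁻¹ • V ε n‖ ≤ M := by
    intro n hn1 hnN
    obtain ⟨m, rfl⟩ := Nat.exists_eq_add_of_le' hn1
    obtain ⟨M, hM⟩ := hbound m (by omega)
    exact exists_bound_inv_smul_of_semiImplicit_step hΔt hbmin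
      (hE.comp (Continuous.prodMk_right _)) (hBlow _) hM
      (fun ε hε => hschemeV ε hε m (by omega))
  refine ⟨hbounded, fun n hnN => ?_⟩
  rcases n with _ | m
  · exact hV0
  · obtain ⟨M, δ, hδ, hM⟩ := hbounded (m + 1) (by omega) hnN
    exact tendsto_smul_nhdsGT_zero_of_bounded_inv_smul hδ hM

/-- In the setting of Proposition 3.2 (first-order semi-implicit scheme with
uniformly bounded `(x^n_ε, ε v^n_ε)`): for each `1 ≤ n ≤ N` the family
`(ε⁻¹ v^n_ε)` is uniformly bounded as `ε → 0`, and `ε v^n_ε → 0` for every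
`0 ≤ n ≤ N`. -/
theorem stmt10 (Δt : ℝ) (hΔt : 0 < Δt) (N : ℕ)
    (E : ℝ → ℂ → ℂ) (B : ℝ → ℂ → ℝ)
    (hE : Continuous (fun p : ℝ × ℂ => E p.1 p.2))
    (hB : Continuous (fun p : ℝ × ℂ => B p.1 p.2))
    (bmin : ℝ) (hbmin : 0 < bmin) (hBlow : ∀ t x, bmin ≤ |B t x|)
    (X V : ℝ → ℕ → ℂ)
    (hschemeX : ∀ ε : ℝ, 0 < ε → ∀ n : ℕ, n < N →
      X ε (n + 1) = X ε n + (Δt / ε) • V ε (n + 1))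
    (hschemeV : ∀ ε : ℝ, 0 < ε → ∀ n : ℕ, n < N →
      V ε (n + 1) = V ε n
        + (Δt / ε) • (ε⁻¹ • (B (n * Δt) (X ε n) • Rrot (V ε (n + 1)))
            + E (n * Δt) (X ε n)))
    (hbound : ∀ n : ℕ, n ≤ N → ∃ M : ℝ, ∀ ε : ℝ, 0 < ε → ε ≤ 1 →
      ‖X ε n‖ ≤ M ∧ ‖ε • V ε n‖ ≤ M)
    (hV0 : Filter.Tendsto (fun ε => ε • V ε 0) (nhdsWithin 0 (Set.Ioi 0)) (nhds 0)) :
    (∀ n : ℕ, 1 ≤ n → n ≤ N → ∃ M δ : ℝ, 0 < δ ∧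
      ∀ ε : ℝ, 0 < ε → ε ≤ δ → ‖ε⁻¹ • V ε n‖ ≤ M) ∧
    (∀ n : ℕ, n ≤ N →
      Filter.Tendsto (fun ε => ε • V ε n) (nhdsWithin 0 (Set.Ioi 0)) (nhds 0)) :=
  stmt10_general Δt hΔt N E B hE bmin hbmin hBlow X V hschemeV hbound hV0
end

section
/- (Consistency of the second-order A-stable scheme as ε → 0, Proposition 3.4.) Under the hypotheses that for each n the families (x^n_ε, ε v^n_ε) are bounded uniformly in ε and (x^0_ε, ε v^0_ε) → (y^0, 0), the solutions of the two-stage scheme x^{(i)} = x^n + (Δt/2ε)v^{(i)}, v^{(1)} = v^n + (Δt/2ε)(ε⁻¹v^{(1)} ∧ B_ext(t^n,x^n) + E(t^n,x^n)), v^{(2)} = v^n + (Δt/2ε)(ε⁻¹v^{(2)} ∧ B_ext(t^{n+1}, 2x^{(1)}−x^n) + E(t^{n+1}, 2x^{(1)}−x^n)), x^{n+1} = x^{(1)} + x^{(2)} − x^n, satisfy x^n_ε → y^n as ε → 0, where y^n solves the Heun-type scheme y^{(1)} = y^n + (Δt/2)U(t^n, y^n), y^{(2)} = y^n + (Δt/2)U(t^{n+1},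 2y^{(1)} − y^n), y^{n+1} = y^{(1)} + y^{(2)} − y^n, with U(t,x) = E(t,x) ∧ B_ext(t,x)/‖B_ext(t,x)‖². -/
open Complex Filter Topology

lemma stage_displacement_eq {Δt ε b : ℝ} (hΔt : Δt ≠ 0) (hε : ε ≠ 0) {V e v : ℂ}
    (hv : v = V + (Δt / (2 * ε)) • (ε⁻¹ • (b • Rrot v) + e)) :
    (Δt / (2 * ε)) • v = ((2 * ε ^ 2 / Δt : ℝ) + I * b)⁻¹ * (ε • V + (Δt / 2) • e) := by
  have hcoef : ((2 * ε ^ 2 / Δt : ℝ) + I * b : ℂ) ≠ 0 := fun h => by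
    have : 2 * ε ^ 2 / Δt = 0 := by simpa [← ofReal_pow] using congrArg re h
    simp_all
  have hεc : (ε : ℂ) ≠ 0 := ofReal_ne_zero.2 hε
  have hΔc : (Δt : ℂ) ≠ 0 := ofReal_ne_zero.2 hΔt
  rw [eq_inv_mul_iff_mul_eq₀ hcoef]
  simp only [Rrot, real_smul] at hv ⊢
  push_cast at hv ⊢
  field_simp at hv ⊢
  linear_combination hv

lemma tendsto_two_mul_sq_div (Δt : ℝ) :
    Tendsto (fun ε : ℝ => 2 * ε ^ 2 / Δt) (𝓝[>] 0) (𝓝 0) := by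
  simpa using ((continuous_const.mul (continuous_pow 2)).div_const Δt).tendsto 0
    |>.mono_left nhdsWithin_le_nhds

lemma tendsto_stage_displacement {Δt : ℝ} (hΔt : Δt ≠ 0) {b : ℝ → ℝ} {b₀ : ℝ} (hb₀ : b₀ ≠ 0)
    {V e v : ℝ → ℂ} {e₀ : ℂ} (hb : Tendsto b (𝓝[>] 0) (𝓝 b₀)) (he : Tendsto e (𝓝[>] 0) (𝓝 e₀))
    (hV : Tendsto (fun ε => ε • V ε) (𝓝[>] 0) (𝓝 0))
    (hv : ∀ ε : ℝ, 0 < ε → v ε = V ε + (Δt / (2 * ε)) • (ε⁻¹ • (b ε • Rrot (v ε)) + e ε)) :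
    Tendsto (fun ε => (Δt / (2 * ε)) • v ε) (𝓝[>] 0) (𝓝 ((Δt / 2) • (b₀⁻¹ • Rrot e₀))) := by
  have hcoef : Tendsto (fun ε : ℝ => ((2 * ε ^ 2 / Δt : ℝ) : ℂ) + I * b ε) (𝓝[>] 0)
      (𝓝 (I * b₀)) := by
    simpa using (continuous_ofReal.tendsto 0 |>.comp (tendsto_two_mul_sq_div Δt)).add
      ((continuous_ofReal.tendsto b₀ |>.comp hb).const_mul I)
  have hlim := (hcoef.inv₀ (mul_ne_zero I_ne_zero (ofReal_ne_zero.2 hb₀))).mul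
    (hV.add (he.const_smul (Δt / 2)))
  have hval : (I * b₀)⁻¹ * (0 + (Δt / 2) • e₀) = (Δt / 2) • (b₀⁻¹ • Rrot e₀) := by
    have : (b₀ : ℂ) ≠ 0 := ofReal_ne_zero.2 hb₀
    simp only [Rrot, real_smul, zero_add]
    push_cast
    field_simp
    linear_combination (Δt * e₀ : ℂ) * I_sq
  rw [← hval]
  exact hlim.congr' (eventually_nhdsWithin_of_forall fun ε hε =>
    (stage_displacement_eq hΔt hε.ne' (hv ε hε)).symm)

lemma tendsto_smul_stage_velocity {Δt : ℝ} (hΔt : Δt ≠ 0) {v : ℝ → ℂ} {d₀ : ℂ}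
    (hd : Tendsto (fun ε => (Δt / (2 * ε)) • v ε) (𝓝[>] 0) (𝓝 d₀)) :
    Tendsto (fun ε => ε • v ε) (𝓝[>] 0) (𝓝 0) := by
  have hsmul : ∀ ε ∈ Set.Ioi (0 : ℝ), (2 * ε ^ 2 / Δt) • (Δt / (2 * ε)) • v ε = ε • v ε :=
    fun ε (hε : 0 < ε) => by rw [smul_smul]; congr 1; field_simp
  simpa using ((tendsto_two_mul_sq_div Δt).smul hd).congr' (eventually_nhdsWithin_of_forall hsmul)

lemma tendsto_stage {Δt : ℝ} (hΔt : Δt ≠ 0) {E : ℝ → ℂ → ℂ} {B : ℝ → ℂ → ℝ}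
    (hE : Continuous fun q : ℝ × ℂ => E q.1 q.2) (hB : Continuous fun q : ℝ × ℂ => B q.1 q.2)
    (t : ℝ) {X P V v x : ℝ → ℂ} {y p : ℂ} (hBp : B t p ≠ 0)
    (hX : Tendsto X (𝓝[>] 0) (𝓝 y)) (hP : Tendsto P (𝓝[>] 0) (𝓝 p))
    (hV : Tendsto (fun ε => ε • V ε) (𝓝[>] 0) (𝓝 0))
    (hv : ∀ ε : ℝ, 0 < ε →
      v ε = V ε + (Δt / (2 * ε)) • (ε⁻¹ • (B t (P ε) • Rrot (v ε)) + E t (P ε)))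
    (hx : ∀ ε : ℝ, 0 < ε → x ε = X ε + (Δt / (2 * ε)) • v ε) :
    Tendsto x (𝓝[>] 0) (𝓝 (y + (Δt / 2) • ((B t p)⁻¹ • Rrot (E t p)))) ∧
      Tendsto (fun ε => ε • v ε) (𝓝[>] 0) (𝓝 0) := by
  have hd := tendsto_stage_displacement hΔt hBp
    ((hB.tendsto (t, p)).comp (tendsto_const_nhds.prodMk_nhds hP))
    ((hE.tendsto (t, p)).comp (tendsto_const_nhds.prodMk_nhds hP)) hV hv
  exact ⟨(hX.add hd).congr' (eventually_nhdsWithin_of_forall fun ε hε => (hx ε hε).symm),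
    tendsto_smul_stage_velocity hΔt hd⟩

theorem stmt13_general (Δt : ℝ) (hΔt : 0 < Δt) (N : ℕ)
    (E : ℝ → ℂ → ℂ) (B : ℝ → ℂ → ℝ)
    (hE : Continuous (fun p : ℝ × ℂ => E p.1 p.2))
    (hB : Continuous (fun p : ℝ × ℂ => B p.1 p.2))
    (bmin : ℝ) (hbmin : 0 < bmin) (hBlow : ∀ t x, bmin ≤ |B t x|)
    (X V x1 v1 x2 v2 : ℝ → ℕ → ℂ)
    (hv1 : ∀ ε : ℝ, 0 < ε → ∀ n : ℕ, n < N →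
      v1 ε n = V ε n + (Δt / (2 * ε)) •
        (ε⁻¹ • (B (n * Δt) (X ε n) • Rrot (v1 ε n)) + E (n * Δt) (X ε n)))
    (hx1 : ∀ ε : ℝ, 0 < ε → ∀ n : ℕ, n < N →
      x1 ε n = X ε n + (Δt / (2 * ε)) • v1 ε n)
    (hv2 : ∀ ε : ℝ, 0 < ε → ∀ n : ℕ, n < N →
      v2 ε n = V ε n + (Δt / (2 * ε)) •
        (ε⁻¹ • (B ((n + 1) * Δt) (2 * x1 ε n - X ε n) • Rrot (v2 ε n))
          + E ((n + 1) * Δt) (2 * x1 ε n - X ε n)))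
    (hx2 : ∀ ε : ℝ, 0 < ε → ∀ n : ℕ, n < N →
      x2 ε n = X ε n + (Δt / (2 * ε)) • v2 ε n)
    (hXn : ∀ ε : ℝ, 0 < ε → ∀ n : ℕ, n < N →
      X ε (n + 1) = x1 ε n + x2 ε n - X ε n)
    (hVn : ∀ ε : ℝ, 0 < ε → ∀ n : ℕ, n < N →
      V ε (n + 1) = v1 ε n + v2 ε n - V ε n)
    (y0 : ℂ)
    (hX0 : Filter.Tendsto (fun ε => X ε 0) (nhdsWithin 0 (Set.Ioi 0)) (nhds y0))
    (hV0 : Filter.Tendsto (fun ε => ε • V ε 0) (nhdsWithin 0 (Set.Ioi 0)) (nhds 0))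
    (U : ℝ → ℂ → ℂ) (hU : ∀ t x, U t x = (B t x)⁻¹ • Rrot (E t x))
    (y y1 y2 : ℕ → ℂ) (hy0 : y 0 = y0)
    (hy1 : ∀ n : ℕ, n < N → y1 n = y n + (Δt / 2) • U (n * Δt) (y n))
    (hy2 : ∀ n : ℕ, n < N →
      y2 n = y n + (Δt / 2) • U ((n + 1) * Δt) (2 * y1 n - y n))
    (hy : ∀ n : ℕ, n < N → y (n + 1) = y1 n + y2 n - y n) :
    ∀ n : ℕ, 1 ≤ n → n ≤ N →
      Filter.Tendsto (fun ε => X ε n) (nhdsWithin 0 (Set.Ioi 0)) (nhds (y n)) := by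
  have hBne : ∀ t x, B t x ≠ 0 := fun t x => abs_pos.mp (hbmin.trans_le (hBlow t x))
  have key : ∀ n ≤ N, Tendsto (fun ε => X ε n) (𝓝[>] 0) (𝓝 (y n)) ∧
      Tendsto (fun ε => ε • V ε n) (𝓝[>] 0) (𝓝 0) := by
    intro n
    induction n with
    | zero => exact fun _ => ⟨hy0 ▸ hX0, hV0⟩
    | succ n ih =>
      intro hn
      obtain ⟨hX, hV⟩ := ih (Nat.le_of_succ_le hn)
      obtain ⟨hx1', hv1'⟩ := tendsto_stage hΔt.ne' hE hB _ (hBne _ _) hX hX hV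
        (fun ε hε => hv1 ε hε n hn) (fun ε hε => hx1 ε hε n hn)
      rw [← hU, ← hy1 n hn] at hx1'
      obtain ⟨hx2', hv2'⟩ := tendsto_stage hΔt.ne' hE hB _ (hBne _ _) hX
        ((hx1'.const_mul 2).sub hX) hV (fun ε hε => hv2 ε hε n hn) (fun ε hε => hx2 ε hε n hn)
      rw [← hU, ← hy2 n hn] at hx2'
      refine ⟨?_, ?_⟩
      · rw [hy n hn]
        exact ((hx1'.add hx2').sub hX).congr'
          (eventually_nhdsWithin_of_forall fun ε hε => (hXn ε hε n hn).symm)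
      · have hsum := ((hv1'.add hv2').sub hV).congr' (f₂ := fun ε => ε • V ε (n + 1))
          (eventually_nhdsWithin_of_forall fun ε hε => by
            dsimp only; rw [hVn ε hε n hn, smul_sub, smul_add])
        simpa only [add_zero, sub_zero] using hsum
  exact fun n _ hn => (key n hn).1

/-- Consistency of the second-order A-stable scheme in the limit `ε → 0`
(Proposition 3.4): under uniform boundedness of `(x^n_ε, ε v^n_ε)` and
convergence of the initial data, the positions `x^n_ε` converge to the
iterates of the Heun-type scheme for the guiding-center velocity
`U = E ∧ B_ext/‖B_ext‖²`. -/
theorem stmt13 (Δt : ℝ) (hΔt : 0 < Δt) (N : ℕ)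
    (E : ℝ → ℂ → ℂ) (B : ℝ → ℂ → ℝ)
    (hE : Continuous (fun p : ℝ × ℂ => E p.1 p.2))
    (hB : Continuous (fun p : ℝ × ℂ => B p.1 p.2))
    (bmin : ℝ) (hbmin : 0 < bmin) (hBlow : ∀ t x, bmin ≤ |B t x|)
    (X V x1 v1 x2 v2 : ℝ → ℕ → ℂ)
    (hv1 : ∀ ε : ℝ, 0 < ε → ∀ n : ℕ, n < N →
      v1 ε n = V ε n + (Δt / (2 * ε)) •
        (ε⁻¹ • (B (n * Δt) (X ε n) • Rrot (v1 ε n)) + E (n * Δt) (X ε n)))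
    (hx1 : ∀ ε : ℝ, 0 < ε → ∀ n : ℕ, n < N →
      x1 ε n = X ε n + (Δt / (2 * ε)) • v1 ε n)
    (hv2 : ∀ ε : ℝ, 0 < ε → ∀ n : ℕ, n < N →
      v2 ε n = V ε n + (Δt / (2 * ε)) •
        (ε⁻¹ • (B ((n + 1) * Δt) (2 * x1 ε n - X ε n) • Rrot (v2 ε n))
          + E ((n + 1) * Δt) (2 * x1 ε n - X ε n)))
    (hx2 : ∀ ε : ℝ, 0 < ε → ∀ n : ℕ, n < N →
      x2 ε n = X ε n + (Δt / (2 * ε)) • v2 ε n)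
    (hXn : ∀ ε : ℝ, 0 < ε → ∀ n : ℕ, n < N →
      X ε (n + 1) = x1 ε n + x2 ε n - X ε n)
    (hVn : ∀ ε : ℝ, 0 < ε → ∀ n : ℕ, n < N →
      V ε (n + 1) = v1 ε n + v2 ε n - V ε n)
    (hbound : ∀ n : ℕ, n ≤ N → ∃ M : ℝ, ∀ ε : ℝ, 0 < ε → ε ≤ 1 →
      ‖X ε n‖ ≤ M ∧ ‖ε • V ε n‖ ≤ M)
    (y0 : ℂ)
    (hX0 : Filter.Tendsto (fun ε => X ε 0) (nhdsWithin 0 (Set.Ioi 0)) (nhds y0))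
    (hV0 : Filter.Tendsto (fun ε => ε • V ε 0) (nhdsWithin 0 (Set.Ioi 0)) (nhds 0))
    (U : ℝ → ℂ → ℂ) (hU : ∀ t x, U t x = (B t x)⁻¹ • Rrot (E t x))
    (y y1 y2 : ℕ → ℂ) (hy0 : y 0 = y0)
    (hy1 : ∀ n : ℕ, n < N → y1 n = y n + (Δt / 2) • U (n * Δt) (y n))
    (hy2 : ∀ n : ℕ, n < N →
      y2 n = y n + (Δt / 2) • U ((n + 1) * Δt) (2 * y1 n - y n))
    (hy : ∀ n : ℕ, n < N → y (n + 1) = y1 n + y2 n - y n) :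
    ∀ n : ℕ, 1 ≤ n → n ≤ N →
      Filter.Tendsto (fun ε => X ε n) (nhdsWithin 0 (Set.Ioi 0)) (nhds (y n)) :=
  stmt13_general Δt hΔt N E B hE hB bmin hbmin hBlow X V x1 v1 x2 v2 hv1 hx1 hv2 hx2 hXn hVn y0 hX0
    hV0 U hU y y1 y2 hy0 hy1 hy2 hy
end
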